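/- arXiv:0806.3468 — 2 statements merged into one kernel-verified Lean document; each statement's English description precedes it below -/
import Mathlib

section
/- Let (f_n(x)) be of binomial type with f₀ = 1 and set x_n := (d/dx) f_n(x) |_{x=0}. Then for every n ≥ 1, f_n(x) = ∑_{k=1}^n B_{n,k}(x₁, x₂, ...) x^k. -/
open Finset

/-- The exponential partial Bell polynomial `B_{n,k}(x₁,x₂,…)`, defined via the
generating function `∑_{n} B_{n,k} tⁿ/n! = (1/k!) (∑_{m≥1} x_m t^m/m!)^k`. -/
noncomputable def bellB (n k : ℕ) (x : ℕ → ℝ) : ℝ :=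
  ((Nat.factorial n : ℝ) / (Nat.factorial k : ℝ)) *
    PowerSeries.coeff (R := ℝ) n
      ((PowerSeries.mk fun m => if m = 0 then 0 else x m / (Nat.factorial m : ℝ)) ^ k)

/-- The complete Bell polynomial `A_n(x₁,…,x_n) = ∑_{k=1}^n B_{n,k}`, `A₀ = 1`. -/
noncomputable def bellA (n : ℕ) (x : ℕ → ℝ) : ℝ :=
  if n = 0 then 1 else ∑ k ∈ Finset.Icc 1 n, bellB n k x

/-!
Comparing the coefficients of `x^k y^l` in `f_n(x + y) = ∑_j C(n,j) f_j(x) f_{n-j}(y)` shows that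
the exponential generating functions `E_k(t) = ∑_n [x^k] f_n · tⁿ/n!` satisfy
`C(k+l, l) E_{k+l} = E_k E_l`. Hence `E_0` is a nonzero idempotent of `K⟦t⟧`, so `E_0 = 1`, and
`E_1^k = k! E_k`. Since `x_n = f_n'(0) = [x^1] f_n`, the series in the definition of `B_{n,k}` is
`E_1`, so `B_{n,k}(x₁, x₂, …) = [x^k] f_n`.
-/

open Polynomial

section BinomialType

variable {R : Type*} [CommRing R]

def IsBinomialType (f : ℕ → R[X]) : Prop :=
  ∀ n : ℕ, ∀ x y : R, (f n).eval (x + y) =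
    ∑ j ∈ range (n + 1), (n.choose j : R) * (f j).eval x * (f (n - j)).eval y

namespace IsBinomialType

variable [IsDomain R] [Infinite R] {f : ℕ → R[X]}

theorem taylor_eq (hf : IsBinomialType f) (n : ℕ) (x : R) :
    taylor x (f n) = ∑ j ∈ range (n + 1), ((n.choose j : R) * (f j).eval x) • f (n - j) := by
  refine Polynomial.funext fun y => ?_
  simp only [taylor_eval, eval_finsetSum, eval_smul, smul_eq_mul, add_comm y x, hf n x y]

-- Both sides are `[y^l] f_n(x + y)` as polynomials in `x`.
theorem hasseDeriv_eq (hf : IsBinomialType f) (n l : ℕ) :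
    hasseDeriv l (f n) = ∑ j ∈ range (n + 1), ((n.choose j : R) * (f (n - j)).coeff l) • f j := by
  refine Polynomial.funext fun x => ?_
  simp only [← taylor_coeff, hf.taylor_eq, finsetSum_coeff, coeff_smul, eval_finsetSum,
    eval_smul, smul_eq_mul]
  exact sum_congr rfl fun j _ => by ring

theorem choose_mul_coeff_add (hf : IsBinomialType f) (n k l : ℕ) :
    ((k + l).choose l : R) * (f n).coeff (k + l) =
      ∑ j ∈ range (n + 1), (n.choose j : R) * (f j).coeff k * (f (n - j)).coeff l := by
  rw [← hasseDeriv_coeff, hf.hasseDeriv_eq]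
  simp only [finsetSum_coeff, coeff_smul, smul_eq_mul]
  exact sum_congr rfl fun j _ => by ring

end IsBinomialType

end BinomialType

section CoeffEGF

variable {K : Type*} [Field K]

noncomputable def coeffEGF (f : ℕ → K[X]) (k : ℕ) : PowerSeries K :=
  PowerSeries.mk fun n => (f n).coeff k / n.factorial

variable [CharZero K] {f : ℕ → K[X]}

namespace IsBinomialType

theorem choose_smul_coeffEGF_add (hf : IsBinomialType f) (k l : ℕ) :
    ((k + l).choose l : K) • coeffEGF f (k + l) = coeffEGF f k * coeffEGF f l := by
  ext n
  rw [PowerSeries.coeff_smul, PowerSeries.coeff_mul, Nat.sum_antidiagonal_eq_sum_range_succ_mk]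
  simp only [coeffEGF, PowerSeries.coeff_mk, smul_eq_mul]
  rw [← mul_div_assoc, hf.choose_mul_coeff_add, sum_div]
  refine sum_congr rfl fun j hj => ?_
  have hfac (m : ℕ) : (m.factorial : K) ≠ 0 := Nat.cast_ne_zero.mpr m.factorial_ne_zero
  rw [Nat.cast_choose K (mem_range_succ_iff.mp hj)]
  field_simp [hfac n, hfac j, hfac (n - j)]

theorem coeffEGF_zero (hf : IsBinomialType f) (hf0 : f 0 = 1) : coeffEGF f 0 = 1 := by
  have hidem : coeffEGF f 0 * coeffEGF f 0 = coeffEGF f 0 := by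
    simpa using (hf.choose_smul_coeffEGF_add 0 0).symm
  have hne : coeffEGF f 0 ≠ 0 := fun h => by
    simpa [coeffEGF, hf0] using congrArg PowerSeries.constantCoeff h
  exact mul_left_cancel₀ hne (by rw [hidem, mul_one])

theorem coeffEGF_one_pow (hf : IsBinomialType f) (hf0 : f 0 = 1) (k : ℕ) :
    coeffEGF f 1 ^ k = (k.factorial : K) • coeffEGF f k := by
  induction k with
  | zero => simp [hf.coeffEGF_zero hf0]
  | succ k ih =>
    rw [pow_succ, ih, smul_mul_assoc, ← hf.choose_smul_coeffEGF_add, smul_smul,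
      Nat.choose_one_right, Nat.factorial_succ]
    push_cast
    rw [mul_comm]

theorem coeff_zero_of_ne_zero (hf : IsBinomialType f) (hf0 : f 0 = 1) {n : ℕ} (hn : n ≠ 0) :
    (f n).coeff 0 = 0 := by
  simpa [coeffEGF, PowerSeries.coeff_one, hn, Nat.factorial_ne_zero] using
    congrArg (PowerSeries.coeff n) (hf.coeffEGF_zero hf0)

end IsBinomialType

end CoeffEGF

theorem IsBinomialType.bellB_derivative_eval_zero {f : ℕ → ℝ[X]} (hf : IsBinomialType f)
    (hf0 : f 0 = 1) (n k : ℕ) :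
    bellB n k (fun m => (derivative (f m)).eval 0) = (f n).coeff k := by
  have hseries : (PowerSeries.mk fun m =>
      if m = 0 then 0 else (derivative (f m)).eval 0 / (m.factorial : ℝ)) = coeffEGF f 1 := by
    ext (_ | m)
    · simp [coeffEGF, hf0, coeff_one]
    · simp [coeffEGF, ← coeff_zero_eq_eval_zero, coeff_derivative]
  have hfac (m : ℕ) : (m.factorial : ℝ) ≠ 0 := Nat.cast_ne_zero.mpr m.factorial_ne_zero
  rw [bellB, hseries, hf.coeffEGF_one_pow hf0, PowerSeries.coeff_smul, coeffEGF,
    PowerSeries.coeff_mk, smul_eq_mul]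
  field_simp [hfac n, hfac k]

theorem stmt_8 (f : ℕ → Polynomial ℝ) (hf0 : f 0 = 1) (hdeg : ∀ n, (f n).natDegree = n)
    (hbin : ∀ n : ℕ, ∀ x y : ℝ, (f n).eval (x + y) =
      ∑ j ∈ Finset.range (n + 1), (n.choose j : ℝ) * (f j).eval x * (f (n - j)).eval y)
    (n : ℕ) (hn : 1 ≤ n) (x : ℝ) :
    (f n).eval x =
      ∑ k ∈ Finset.Icc 1 n,
        bellB n k (fun m => (Polynomial.derivative (f m)).eval 0) * x ^ k := by
  have hf : IsBinomialType f := hbin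
  rw [eval_eq_sum_range' ((hdeg n).trans_lt n.lt_succ_self), range_eq_Ico,
    sum_eq_sum_Ico_succ_bot (by omega : 0 < n + 1), Ico_add_one_right_eq_Icc,
    hf.coeff_zero_of_ne_zero hf0 (by omega)]
  simp only [zero_mul, zero_add, hf.bellB_derivative_eval_zero hf0]
end

section
/- Let a₀, a₁, a₂, ... be real numbers and define the Appell polynomial A_n(z) := ∑_{j=0}^n C(n,j) a_j z^{n-j}. Then for all natural numbers n ≥ k ≥ 1 and real z, B_{n,k}(A₀(z), 2A₁(z), ..., m·A_{m-1}(z), ...) = ∑_{j=k}^n C(n,j) B_{j,k}(a₀, 2a₁, 3a₂, ..., m·a_{m-1}, ...) (kz)^{n-j}. -/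
open Finset

/-- The Appell polynomial `A_n(z) = ∑_{j=0}^n C(n,j) a_j z^{n-j}`. -/
noncomputable def appell (a : ℕ → ℝ) (n : ℕ) (z : ℝ) : ℝ :=
  ∑ j ∈ Finset.range (n + 1), (n.choose j : ℝ) * a j * z ^ (n - j)


/-!
The Bell series of `m ↦ m·b_{m-1}` is `t·E(b)`, where `E(b) = ∑ bₙ tⁿ/n!`, and the Appell
sequence satisfies `E(A(z)) = E(a)·e^{zt}`. So the `k`-th power of the Bell series of
`m ↦ m·A_{m-1}(z)` is that of `m ↦ m·a_{m-1}` times `e^{kzt}`, and reading off the coefficient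
of `tⁿ` turns the product of exponential generating functions into a binomial convolution.
-/

open PowerSeries
open scoped Nat

section Egf

variable {K : Type*} [Field K]

noncomputable def egf (a : ℕ → K) : K⟦X⟧ :=
  mk fun n => a n / n !

theorem coeff_egf (a : ℕ → K) (n : ℕ) : coeff n (egf a) = a n / n ! :=
  coeff_mk _ _

theorem egf_mul [CharZero K] (a b : ℕ → K) :
    egf a * egf b =
      egf fun n => ∑ j ∈ range (n + 1), (n.choose j : K) * a j * b (n - j) := by
  ext n
  rw [coeff_mul, Nat.sum_antidiagonal_eq_sum_range_succ_mk, coeff_egf, sum_div]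
  refine sum_congr rfl fun j hj => ?_
  have : (n ! : K) ≠ 0 := Nat.cast_ne_zero.mpr n.factorial_ne_zero
  rw [coeff_egf, coeff_egf, Nat.cast_choose K (mem_range_succ_iff.mp hj)]
  field_simp

theorem egf_pow_eq_rescale_exp [CharZero K] (c : K) : egf (c ^ ·) = rescale c (exp K) := by
  ext n
  simp [coeff_egf, coeff_rescale, coeff_exp, div_eq_mul_inv]

theorem egf_natCast_mul_shift [CharZero K] (b : ℕ → K) :
    egf (fun m => (m : K) * b (m - 1)) = X * egf b := by
  ext m
  rcases m with _ | m
  · simp [coeff_egf]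
  · rw [coeff_succ_X_mul, coeff_egf, coeff_egf, Nat.factorial_succ, Nat.add_sub_cancel]
    push_cast
    field_simp

end Egf

theorem egf_appell (a : ℕ → ℝ) (z : ℝ) :
    egf (appell a · z) = egf a * rescale z (exp ℝ) := by
  rw [← egf_pow_eq_rescale_exp, egf_mul]
  rfl

theorem bellB_eq_coeff_egf_pow {x : ℕ → ℝ} (hx : x 0 = 0) (n k : ℕ) :
    bellB n k x = n ! / k ! * coeff n (egf x ^ k) := by
  unfold bellB egf
  congr 4
  ext m
  split_ifs with hm <;> simp [hm, hx]

theorem bellB_eq_zero_of_lt {n k : ℕ} (x : ℕ → ℝ) (h : n < k) : bellB n k x = 0 := by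
  have hX : (X : ℝ⟦X⟧) ∣ mk fun m => if m = 0 then 0 else x m / m ! :=
    X_dvd_iff.mpr (by simp [← coeff_zero_eq_constantCoeff_apply])
  rw [bellB, (X_pow_dvd_iff.mp (pow_dvd_pow_of_dvd hX k)) n h, mul_zero]

theorem egf_pow {x : ℕ → ℝ} (hx : x 0 = 0) (k : ℕ) :
    egf x ^ k = (k ! : ℝ) • egf (bellB · k x) := by
  ext n
  rw [coeff_smul, coeff_egf, bellB_eq_coeff_egf_pow hx, smul_eq_mul]
  field_simp

theorem bellB_eq_sum_of_egf_eq_mul_exp {x y : ℕ → ℝ} (hx : x 0 = 0) (hy : y 0 = 0) {c : ℝ}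
    (h : egf y = egf x * rescale c (exp ℝ)) (n k : ℕ) :
    bellB n k y = ∑ j ∈ Icc k n, (n.choose j : ℝ) * bellB j k x * ((k : ℝ) * c) ^ (n - j) := by
  have hpow : egf y ^ k = (k ! : ℝ) • (egf (bellB · k x) * egf (((k : ℝ) * c) ^ ·)) := by
    rw [h, mul_pow, egf_pow hx, ← map_pow, exp_pow_eq_rescale_exp, rescale_rescale,
      egf_pow_eq_rescale_exp, smul_mul_assoc]
  rw [bellB_eq_coeff_egf_pow hy, hpow, egf_mul, coeff_smul, coeff_egf, smul_eq_mul]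
  have hsum : ∑ j ∈ Icc k n, (n.choose j : ℝ) * bellB j k x * ((k : ℝ) * c) ^ (n - j) =
      ∑ j ∈ range (n + 1), (n.choose j : ℝ) * bellB j k x * ((k : ℝ) * c) ^ (n - j) :=
    sum_subset (fun j hj => mem_range_succ_iff.mpr (mem_Icc.mp hj).2) fun j hjn hjk => by
      rw [mem_range, mem_Icc] at *
      rw [bellB_eq_zero_of_lt x (by omega), mul_zero, zero_mul]
  rw [hsum]
  field_simp

theorem stmt_9_general (a : ℕ → ℝ) (n k : ℕ) (z : ℝ) :
    bellB n k (fun m => (m : ℝ) * appell a (m - 1) z) =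
      ∑ j ∈ Finset.Icc k n,
        (n.choose j : ℝ) * bellB j k (fun m => (m : ℝ) * a (m - 1)) *
          ((k : ℝ) * z) ^ (n - j) := by
  refine bellB_eq_sum_of_egf_eq_mul_exp (by simp) (by simp) ?_ n k
  rw [egf_natCast_mul_shift (appell a · z), egf_natCast_mul_shift, egf_appell, mul_assoc]

theorem stmt_9 (a : ℕ → ℝ) (n k : ℕ) (hk : 1 ≤ k) (hkn : k ≤ n) (z : ℝ) :
    bellB n k (fun m => (m : ℝ) * appell a (m - 1) z) =
      ∑ j ∈ Finset.Icc k n,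
        (n.choose j : ℝ) * bellB j k (fun m => (m : ℝ) * a (m - 1)) *
          ((k : ℝ) * z) ^ (n - j) :=
  stmt_9_general a n k z
end
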